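/- If agent i has the minimal log loss among all agents and equal initial wealth w_i = 1/n, then after T rounds agent i's wealth is at least 1/n, and the market log loss L satisfies L ≤ min_i L_i + log n. -/

import Mathlib

open Finset Real

/-!
Since the price is the wealth-weighted mean forecast, every Kelly update redistributes the total
wealth without changing it. Unrolling the updates, agent `j` holds
`w_T j = (1/n) * exp (L - L_j)`, so the wealths are ordered inversely to the cumulative losses.
The best agent therefore holds at least the average wealth `1/n`, and since no agent holds more
than the total wealth `1`, `exp (L - L_i) ≤ n`.
-/

noncomputable def logLoss (p : ℝ) (y : ℕ) : ℝ :=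
  (y : ℝ) * log (1 / p) + (1 - (y : ℝ)) * log (1 / (1 - p))

noncomputable def cumLogLoss (p : ℕ → ℝ) (y : ℕ → ℕ) (T : ℕ) : ℝ :=
  ∑ t ∈ range T, logLoss (p t) (y t)

lemma kelly_factor_eq_exp_sub_logLoss {p q : ℝ} (hp : 0 < p ∧ p < 1) (hq : 0 < q ∧ q < 1)
    {y : ℕ} (hy : y = 0 ∨ y = 1) :
    (p / q) ^ y * ((1 - p) / (1 - q)) ^ (1 - y) = exp (logLoss q y - logLoss p y) := by
  obtain ⟨hp0, hp1⟩ := hp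
  obtain ⟨hq0, hq1⟩ := hq
  rcases hy with rfl | rfl
  · have hp' : 0 < 1 - p := by linarith
    have hq' : 0 < 1 - q := by linarith
    simp only [logLoss, one_div, log_inv, Nat.cast_zero, zero_mul, zero_add, sub_zero, one_mul,
      Nat.sub_zero, pow_zero, pow_one, neg_sub_neg, exp_sub, exp_log hp', exp_log hq']
  · simp only [logLoss, one_div, log_inv, Nat.cast_one, one_mul, sub_self, zero_mul, add_zero,
      Nat.sub_self, pow_one, pow_zero, mul_one, neg_sub_neg, exp_sub, exp_log hp0, exp_log hq0]

lemma eq_mul_exp_sum_of_forall_succ {u a : ℕ → ℝ} (h : ∀ t, u (t + 1) = u t * exp (a t))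
    (T : ℕ) : u T = u 0 * exp (∑ t ∈ range T, a t) := by
  induction T with
  | zero => simp
  | succ T ih => rw [h, ih, sum_range_succ, exp_add, mul_assoc]

lemma sum_mul_kelly_factor {ι : Type*} [Fintype ι] {w p : ι → ℝ} {q : ℝ} {y : ℕ}
    (hy : y = 0 ∨ y = 1) (hw : ∑ j, w j = 1) (hprice : q = ∑ j, w j * p j)
    (hq0 : q ≠ 0) (hq1 : q ≠ 1) :
    ∑ j, w j * (p j / q) ^ y * ((1 - p j) / (1 - q)) ^ (1 - y) = 1 := by
  rcases hy with rfl | rfl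
  · have hsum : ∑ j, w j * (1 - p j) = 1 - q := by
      simp only [mul_sub, mul_one, sum_sub_distrib, hw, hprice]
    simp only [Nat.sub_zero, pow_zero, pow_one, mul_one, mul_div_assoc', ← sum_div, hsum]
    exact div_self (sub_ne_zero.mpr hq1.symm)
  · simp only [Nat.sub_self, pow_zero, pow_one, mul_one, mul_div_assoc', ← sum_div, ← hprice]
    exact div_self hq0

section KellyMarket

variable {ι : Type*} {w : ℕ → ι → ℝ} {p : ι → ℕ → ℝ} {q : ℕ → ℝ} {y : ℕ → ℕ}

lemma wealth_eq_mul_exp_cumLogLoss (hp : ∀ j t, 0 < p j t ∧ p j t < 1)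
    (hq : ∀ t, 0 < q t ∧ q t < 1) (hy : ∀ t, y t = 0 ∨ y t = 1)
    (hupdate : ∀ t j, w (t + 1) j =
      w t j * (p j t / q t) ^ (y t) * ((1 - p j t) / (1 - q t)) ^ (1 - y t))
    (t : ℕ) (j : ι) :
    w t j = w 0 j * exp (cumLogLoss q y t - cumLogLoss (p j) y t) := by
  rw [cumLogLoss, cumLogLoss, ← sum_sub_distrib]
  refine eq_mul_exp_sum_of_forall_succ (u := fun t => w t j) (fun s => ?_) t
  rw [hupdate, mul_assoc, kelly_factor_eq_exp_sub_logLoss (hp j s) (hq s) (hy s)]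

lemma sum_wealth_eq_one [Fintype ι] (hw0 : ∑ j, w 0 j = 1) (hy : ∀ t, y t = 0 ∨ y t = 1)
    (hprice : ∀ t, q t = ∑ j, w t j * p j t) (hq : ∀ t, 0 < q t ∧ q t < 1)
    (hupdate : ∀ t j, w (t + 1) j =
      w t j * (p j t / q t) ^ (y t) * ((1 - p j t) / (1 - q t)) ^ (1 - y t))
    (t : ℕ) : ∑ j, w t j = 1 := by
  induction t with
  | zero => exact hw0
  | succ t ih =>
    simp only [hupdate]
    exact sum_mul_kelly_factor (hy t) ih (hprice t) (hq t).1.ne' (hq t).2.ne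

end KellyMarket

theorem kelly_market_min_loss_agent_general
    (n T : ℕ)
    (w : ℕ → Fin n → ℝ) (pit : Fin n → ℕ → ℝ) (pt : ℕ → ℝ) (y : ℕ → ℕ)
    (hw0 : ∀ i, w 0 i = 1 / n)
    (hpit : ∀ i t, 0 < pit i t ∧ pit i t < 1)
    (hy : ∀ t, y t = 0 ∨ y t = 1)
    (hprice : ∀ t, pt t = ∑ j, w t j * pit j t)
    (hpt : ∀ t, 0 < pt t ∧ pt t < 1)
    (hupdate : ∀ t i, w (t + 1) i =
      w t i * (pit i t / pt t) ^ (y t) * ((1 - pit i t) / (1 - pt t)) ^ (1 - y t))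
    (i : Fin n)
    (hmin : ∀ j : Fin n,
      (∑ t ∈ Finset.range T, ((y t : ℝ) * Real.log (1 / pit i t) +
        (1 - (y t : ℝ)) * Real.log (1 / (1 - pit i t)))) ≤
      (∑ t ∈ Finset.range T, ((y t : ℝ) * Real.log (1 / pit j t) +
        (1 - (y t : ℝ)) * Real.log (1 / (1 - pit j t))))) :
    (1 / n : ℝ) ≤ w T i ∧
    (∑ t ∈ Finset.range T, ((y t : ℝ) * Real.log (1 / pt t) +
        (1 - (y t : ℝ)) * Real.log (1 / (1 - pt t)))) ≤
      (∑ t ∈ Finset.range T, ((y t : ℝ) * Real.log (1 / pit i t) +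
        (1 - (y t : ℝ)) * Real.log (1 / (1 - pit i t)))) + Real.log n := by
  change ∀ j, cumLogLoss (pit i) y T ≤ cumLogLoss (pit j) y T at hmin
  change _ ≤ w T i ∧ cumLogLoss pt y T ≤ cumLogLoss (pit i) y T + log n
  have hn : (0 : ℝ) < n := Nat.cast_pos.mpr i.pos
  have hwT (j : Fin n) : w T j = 1 / n * exp (cumLogLoss pt y T - cumLogLoss (pit j) y T) := by
    rw [wealth_eq_mul_exp_cumLogLoss hpit hpt hy hupdate, hw0]
  have hsum : ∑ j, w T j = 1 :=
    sum_wealth_eq_one (by simp [hw0, hn.ne']) hy hprice hpt hupdate T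
  constructor
  · have hmax (j : Fin n) : w T j ≤ w T i := by
      rw [hwT, hwT]
      gcongr
      exact hmin j
    have := hsum ▸ sum_le_card_nsmul univ (w T) (w T i) fun j _ => hmax j
    rw [card_univ, Fintype.card_fin, nsmul_eq_mul] at this
    rwa [div_le_iff₀' hn]
  · have hle : w T i ≤ 1 :=
      hsum ▸ single_le_sum (fun j _ => (hwT j).symm ▸ by positivity) (mem_univ i)
    rw [hwT, one_div_mul_eq_div, div_le_one hn] at hle
    linarith [(le_log_iff_exp_le hn).mpr hle]

/-- With equal initial wealths `1/n`, if agent `i` has minimal log loss then its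
final wealth is at least `1/n`, and the market log loss satisfies
`L ≤ L_i + log n`. -/
theorem kelly_market_min_loss_agent
    (n T : ℕ) (hn : 0 < n)
    (w : ℕ → Fin n → ℝ) (pit : Fin n → ℕ → ℝ) (pt : ℕ → ℝ) (y : ℕ → ℕ)
    (hw0 : ∀ i, w 0 i = 1 / n)
    (hpit : ∀ i t, 0 < pit i t ∧ pit i t < 1)
    (hy : ∀ t, y t = 0 ∨ y t = 1)
    (hprice : ∀ t, pt t = ∑ j, w t j * pit j t)
    (hpt : ∀ t, 0 < pt t ∧ pt t < 1)
    (hupdate : ∀ t i, w (t + 1) i =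
      w t i * (pit i t / pt t) ^ (y t) * ((1 - pit i t) / (1 - pt t)) ^ (1 - y t))
    (i : Fin n)
    (hmin : ∀ j : Fin n,
      (∑ t ∈ Finset.range T, ((y t : ℝ) * Real.log (1 / pit i t) +
        (1 - (y t : ℝ)) * Real.log (1 / (1 - pit i t)))) ≤
      (∑ t ∈ Finset.range T, ((y t : ℝ) * Real.log (1 / pit j t) +
        (1 - (y t : ℝ)) * Real.log (1 / (1 - pit j t))))) :
    (1 / n : ℝ) ≤ w T i ∧
    (∑ t ∈ Finset.range T, ((y t : ℝ) * Real.log (1 / pt t) +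
        (1 - (y t : ℝ)) * Real.log (1 / (1 - pt t)))) ≤
      (∑ t ∈ Finset.range T, ((y t : ℝ) * Real.log (1 / pit i t) +
        (1 - (y t : ℝ)) * Real.log (1 / (1 - pit i t)))) + Real.log n :=
  kelly_market_min_loss_agent_general n T w pit pt y hw0 hpit hy hprice hpt hupdate i hmin
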